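/- (Relaxation equivalence, Lemma 3) Suppose γ_SR non-increasing and γ_RD non-decreasing. Let R_s*[n] be the classic water-filling rates of the source with budget E_s (hence non-increasing in n). Then the optimal solution of the relaxed relay problem (which keeps only the causality constraint at n = N) given by water-filling with budget Ê_r also satisfies all intermediate causality constraints ∑_{i=2}^n R_r*[i] ≤ ∑_{i=1}^{n−1} R_s*[i] for n = 2,…,N−1; hence the relaxed and unrelaxed problems have the same optimal value. -/

import Mathlib

/-!
Both sequences of water-filling rates have `N - 1` terms: the relay rates
`max (logb 2 (ξ γ_RD n)) 0` are non-decreasing in `n` and the source rates are non-increasing.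
By Chebyshev's sum inequality, the average of an initial segment of a non-decreasing sequence is
at most its overall average, and the reverse holds for a non-increasing one. Hence the total
causality constraint, which the relaxed optimum satisfies, propagates to every initial segment:
`(N-1) ∑_{i ≤ n} R_r ≤ (n-1) ∑ R_r ≤ (n-1) ∑ R_s ≤ (N-1) ∑_{i < n} R_s`.
The water-filling powers realise these rates, so the relaxed optimum is feasible for the
unrelaxed problem, whose feasible set lies inside the relaxed one; both maxima therefore agree.
-/

open Finset

section Chebyshev

variable {ι α : Type*} [LinearOrder ι] [CommRing α] [LinearOrder α] [IsStrictOrderedRing α]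
  {s : Finset ι} {f : ι → α}

theorem antitone_ite_le_one_zero (m : ι) : Antitone fun i ↦ if i ≤ m then (1 : α) else 0 := by
  intro i j hij
  dsimp only
  split_ifs with hj hi <;> first | exact le_rfl | exact zero_le_one | exact absurd (hij.trans hj) hi

theorem MonotoneOn.card_mul_sum_filter_le (hf : MonotoneOn f s) (m : ι) :
    (#s : α) * ∑ i ∈ s with i ≤ m, f i ≤ #{i ∈ s | i ≤ m} * ∑ i ∈ s, f i := by
  have hanti : AntivaryOn f (fun i ↦ if i ≤ m then (1 : α) else 0) s := fun i hi j hj hij ↦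
    hf hj hi ((antitone_ite_le_one_zero m).reflect_lt hij).le
  simpa [sum_filter, mul_comm] using hanti.card_mul_sum_le_sum_mul_sum

theorem AntitoneOn.card_filter_mul_sum_le (hf : AntitoneOn f s) (m : ι) :
    (#{i ∈ s | i ≤ m} : α) * ∑ i ∈ s, f i ≤ #s * ∑ i ∈ s with i ≤ m, f i := by
  have hmono : MonovaryOn f (fun i ↦ if i ≤ m then (1 : α) else 0) s := fun i hi j hj hij ↦
    hf hj hi ((antitone_ite_le_one_zero m).reflect_lt hij).le
  simpa [sum_filter, mul_comm] using hmono.sum_mul_sum_le_card_mul_sum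

end Chebyshev

theorem Finset.Icc_filter_le_of_le_right {α : Type*} [Preorder α] [LocallyFiniteOrder α]
    {a b c : α} [DecidablePred (· ≤ c)] (hcb : c ≤ b) : {x ∈ Icc a b | x ≤ c} = Icc a c := by
  ext x
  simp only [mem_filter, mem_Icc]
  exact ⟨fun h ↦ ⟨h.1.1, h.2⟩, fun h ↦ ⟨⟨h.1, h.2.trans hcb⟩, h.2⟩⟩

theorem sum_Icc_le_sum_Icc_of_monotoneOn_of_antitoneOn {α : Type*} [Field α] [LinearOrder α]
    [IsStrictOrderedRing α] {f g : ℕ → α} {a b c d m m' : ℕ}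
    (hf : MonotoneOn f (Icc a b)) (hg : AntitoneOn g (Icc c d))
    (hfg : ∑ i ∈ Icc a b, f i ≤ ∑ i ∈ Icc c d, g i)
    (hlen : #(Icc a b) = #(Icc c d)) (hlen' : #(Icc a m) = #(Icc c m'))
    (ham : a ≤ m) (hmb : m ≤ b) (hm'd : m' ≤ d) :
    ∑ i ∈ Icc a m, f i ≤ ∑ i ∈ Icc c m', g i := by
  have hf' := hf.card_mul_sum_filter_le (α := α) m
  have hg' := hg.card_filter_mul_sum_le (α := α) m'
  rw [Icc_filter_le_of_le_right hmb] at hf'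
  rw [Icc_filter_le_of_le_right hm'd] at hg'
  have hpos : (0 : α) < #(Icc a b) := by
    exact_mod_cast card_pos.mpr ⟨a, mem_Icc.mpr ⟨le_rfl, ham.trans hmb⟩⟩
  refine le_of_mul_le_mul_left ?_ hpos
  calc (#(Icc a b) : α) * ∑ i ∈ Icc a m, f i
      ≤ #(Icc a m) * ∑ i ∈ Icc a b, f i := hf'
    _ ≤ #(Icc c m') * ∑ i ∈ Icc c d, g i := by rw [hlen']; gcongr
    _ ≤ #(Icc a b) * ∑ i ∈ Icc c m', g i := by rw [hlen]; exact hg'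

theorem monotoneOn_max_logb_zero : MonotoneOn (fun x : ℝ ↦ max (Real.logb 2 x) 0) (Set.Ici 0) := by
  intro x hx y _ hxy
  rcases (Set.mem_Ici.mp hx).eq_or_lt with rfl | hx
  · simp
  · exact max_le_max (Real.logb_le_logb_of_le one_lt_two hx hxy) le_rfl

section Rates

variable {ι : Type*} [Preorder ι] {s : Set ι} {γ : ι → ℝ} {ξ : ℝ}

theorem MonotoneOn.max_logb_const_mul (hγ : MonotoneOn γ s) (hγ0 : ∀ i ∈ s, 0 ≤ γ i)
    (hξ : 0 ≤ ξ) : MonotoneOn (fun i ↦ max (Real.logb 2 (ξ * γ i)) 0) s :=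
  monotoneOn_max_logb_zero.comp (fun _ hi _ hj hij ↦ mul_le_mul_of_nonneg_left (hγ hi hj hij) hξ)
    fun i hi ↦ mul_nonneg hξ (hγ0 i hi)

theorem AntitoneOn.max_logb_const_mul (hγ : AntitoneOn γ s) (hγ0 : ∀ i ∈ s, 0 ≤ γ i)
    (hξ : 0 ≤ ξ) : AntitoneOn (fun i ↦ max (Real.logb 2 (ξ * γ i)) 0) s :=
  monotoneOn_max_logb_zero.comp_AntitoneOn
    (fun _ hi _ hj hij ↦ mul_le_mul_of_nonneg_left (hγ hi hj hij) hξ)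
    fun i hi ↦ mul_nonneg hξ (hγ0 i hi)

end Rates

theorem logb_one_add_max_sub_inv_mul {ξ γ : ℝ} (hξ : 0 ≤ ξ) (hγ : 0 < γ) :
    Real.logb 2 (1 + max (ξ - 1 / γ) 0 * γ) = max (Real.logb 2 (ξ * γ)) 0 := by
  rw [max_mul_of_nonneg _ _ hγ.le, sub_mul, one_div_mul_cancel hγ.ne', zero_mul]
  rcases le_total (ξ * γ) 1 with h | h
  · rw [max_eq_right (by linarith), add_zero, Real.logb_one,
      max_eq_right (Real.logb_nonpos one_lt_two (by positivity) h)]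
  · rw [max_eq_left (by linarith), add_sub_cancel, max_eq_left (Real.logb_nonneg one_lt_two h)]

theorem stmt_15_general (N : ℕ) (hN : 2 ≤ N) (γSR γRD : ℕ → ℝ)
    (hSR0 : ∀ n ∈ Finset.Icc 1 (N - 1), 0 < γSR n)
    (hRD0 : ∀ n ∈ Finset.Icc 2 N, 0 < γRD n)
    (hSR : ∀ m ∈ Finset.Icc 1 (N - 1), ∀ n ∈ Finset.Icc 1 (N - 1), m ≤ n → γSR n ≤ γSR m)
    (hRD : ∀ m ∈ Finset.Icc 2 N, ∀ n ∈ Finset.Icc 2 N, m ≤ n → γRD m ≤ γRD n)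
    (Er : ℝ)
    (eta xi Ehatr : ℝ) (heta : 0 < eta) (hxi : 0 ≤ xi)
    (hEhat1 : Ehatr ≤ Er)
    (hWFr : (∑ n ∈ Finset.Icc 2 N, max (xi - 1 / γRD n) 0) = Ehatr)
    (hopt : IsGreatest {v : ℝ | ∃ pr : ℕ → ℝ,
        (∀ n ∈ Finset.Icc 2 N, 0 ≤ pr n) ∧
        (∑ n ∈ Finset.Icc 2 N, pr n) ≤ Er ∧
        (∑ n ∈ Finset.Icc 2 N, Real.logb 2 (1 + pr n * γRD n)) ≤
          ∑ n ∈ Finset.Icc 1 (N - 1), max (Real.logb 2 (eta * γSR n)) 0 ∧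
        v = ∑ n ∈ Finset.Icc 2 N, Real.logb 2 (1 + pr n * γRD n)}
      (∑ n ∈ Finset.Icc 2 N, max (Real.logb 2 (xi * γRD n)) 0)) :
    (∀ n ∈ Finset.Icc 2 N,
      (∑ i ∈ Finset.Icc 2 n, max (Real.logb 2 (xi * γRD i)) 0) ≤
        ∑ i ∈ Finset.Icc 1 (n - 1), max (Real.logb 2 (eta * γSR i)) 0) ∧
    sSup {v : ℝ | ∃ pr : ℕ → ℝ,
        (∀ n ∈ Finset.Icc 2 N, 0 ≤ pr n) ∧
        (∑ n ∈ Finset.Icc 2 N, pr n) ≤ Er ∧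
        (∑ n ∈ Finset.Icc 2 N, Real.logb 2 (1 + pr n * γRD n)) ≤
          ∑ n ∈ Finset.Icc 1 (N - 1), max (Real.logb 2 (eta * γSR n)) 0 ∧
        v = ∑ n ∈ Finset.Icc 2 N, Real.logb 2 (1 + pr n * γRD n)} =
      sSup {v : ℝ | ∃ pr : ℕ → ℝ,
        (∀ n ∈ Finset.Icc 2 N, 0 ≤ pr n) ∧
        (∑ n ∈ Finset.Icc 2 N, pr n) ≤ Er ∧
        (∀ n ∈ Finset.Icc 2 N,
          (∑ i ∈ Finset.Icc 2 n, Real.logb 2 (1 + pr i * γRD i)) ≤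
            ∑ i ∈ Finset.Icc 1 (n - 1), max (Real.logb 2 (eta * γSR i)) 0) ∧
        v = ∑ n ∈ Finset.Icc 2 N, Real.logb 2 (1 + pr n * γRD n)} := by
  have hrelay : MonotoneOn (fun i ↦ max (Real.logb 2 (xi * γRD i)) 0) (Icc 2 N) :=
    MonotoneOn.max_logb_const_mul (fun _ hm _ hn ↦ hRD _ hm _ hn) (fun i hi ↦ (hRD0 i hi).le) hxi
  have hsource : AntitoneOn (fun i ↦ max (Real.logb 2 (eta * γSR i)) 0) (Icc 1 (N - 1)) :=
    AntitoneOn.max_logb_const_mul (fun _ hm _ hn ↦ hSR _ hm _ hn) (fun i hi ↦ (hSR0 i hi).le)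
      heta.le
  have htotal : ∑ n ∈ Icc 2 N, max (Real.logb 2 (xi * γRD n)) 0 ≤
      ∑ n ∈ Icc 1 (N - 1), max (Real.logb 2 (eta * γSR n)) 0 := by
    obtain ⟨pr, -, -, hcausal, hv⟩ := hopt.1
    exact hv ▸ hcausal
  have hcausal : ∀ n ∈ Icc 2 N, ∑ i ∈ Icc 2 n, max (Real.logb 2 (xi * γRD i)) 0 ≤
      ∑ i ∈ Icc 1 (n - 1), max (Real.logb 2 (eta * γSR i)) 0 := fun n hn ↦ by
    obtain ⟨hn2, hnN⟩ := mem_Icc.mp hn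
    exact sum_Icc_le_sum_Icc_of_monotoneOn_of_antitoneOn hrelay hsource htotal
      (by simp only [Nat.card_Icc]; omega) (by simp only [Nat.card_Icc]; omega) hn2 hnN (by omega)
  have hrate : ∀ n ∈ Icc 2 N, Real.logb 2 (1 + max (xi - 1 / γRD n) 0 * γRD n) =
      max (Real.logb 2 (xi * γRD n)) 0 := fun n hn ↦ logb_one_add_max_sub_inv_mul hxi (hRD0 n hn)
  refine ⟨hcausal, ?_⟩
  rw [hopt.csSup_eq]
  refine (IsGreatest.csSup_eq ?_).symm
  refine ⟨⟨fun n ↦ max (xi - 1 / γRD n) 0, fun _ _ ↦ le_max_right _ _, hWFr ▸ hEhat1,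
    fun n hn ↦ ?_, (sum_congr rfl hrate).symm⟩, ?_⟩
  · rw [sum_congr rfl fun i hi ↦ hrate i (Icc_subset_Icc_right (mem_Icc.mp hn).2 hi)]
    exact hcausal n hn
  · rintro v ⟨pr, hpr0, hbudget, hcausal', rfl⟩
    exact hopt.2 ⟨pr, hpr0, hbudget, hcausal' N (right_mem_Icc.mpr hN), rfl⟩

/-- Lemma 3 (relaxation equivalence): with `γ_SR` non-increasing and `γ_RD`
non-decreasing, let `Rs*` be the source water-filling rates with budget `E_s`
and let relay water-filling with budget `Ê_r` (water level ξ) be optimal for the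
relaxed problem that keeps only the total (n = N) causality constraint. Then
this solution also satisfies all intermediate causality constraints, and the
relaxed and unrelaxed problems have the same optimal value. -/
theorem stmt_15 (N : ℕ) (hN : 2 ≤ N) (γSR γRD : ℕ → ℝ)
    (hSR0 : ∀ n ∈ Finset.Icc 1 (N - 1), 0 < γSR n)
    (hRD0 : ∀ n ∈ Finset.Icc 2 N, 0 < γRD n)
    (hSR : ∀ m ∈ Finset.Icc 1 (N - 1), ∀ n ∈ Finset.Icc 1 (N - 1), m ≤ n → γSR n ≤ γSR m)
    (hRD : ∀ m ∈ Finset.Icc 2 N, ∀ n ∈ Finset.Icc 2 N, m ≤ n → γRD m ≤ γRD n)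
    (Es Er : ℝ) (hEs : 0 < Es) (hEr : 0 < Er)
    (eta xi Ehatr : ℝ) (heta : 0 < eta) (hxi : 0 ≤ xi)
    (hEhat0 : 0 ≤ Ehatr) (hEhat1 : Ehatr ≤ Er)
    (hWFs : (∑ n ∈ Finset.Icc 1 (N - 1), max (eta - 1 / γSR n) 0) = Es)
    (hWFr : (∑ n ∈ Finset.Icc 2 N, max (xi - 1 / γRD n) 0) = Ehatr)
    (hopt : IsGreatest {v : ℝ | ∃ pr : ℕ → ℝ,
        (∀ n ∈ Finset.Icc 2 N, 0 ≤ pr n) ∧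
        (∑ n ∈ Finset.Icc 2 N, pr n) ≤ Er ∧
        (∑ n ∈ Finset.Icc 2 N, Real.logb 2 (1 + pr n * γRD n)) ≤
          ∑ n ∈ Finset.Icc 1 (N - 1), max (Real.logb 2 (eta * γSR n)) 0 ∧
        v = ∑ n ∈ Finset.Icc 2 N, Real.logb 2 (1 + pr n * γRD n)}
      (∑ n ∈ Finset.Icc 2 N, max (Real.logb 2 (xi * γRD n)) 0)) :
    (∀ n ∈ Finset.Icc 2 N,
      (∑ i ∈ Finset.Icc 2 n, max (Real.logb 2 (xi * γRD i)) 0) ≤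
        ∑ i ∈ Finset.Icc 1 (n - 1), max (Real.logb 2 (eta * γSR i)) 0) ∧
    sSup {v : ℝ | ∃ pr : ℕ → ℝ,
        (∀ n ∈ Finset.Icc 2 N, 0 ≤ pr n) ∧
        (∑ n ∈ Finset.Icc 2 N, pr n) ≤ Er ∧
        (∑ n ∈ Finset.Icc 2 N, Real.logb 2 (1 + pr n * γRD n)) ≤
          ∑ n ∈ Finset.Icc 1 (N - 1), max (Real.logb 2 (eta * γSR n)) 0 ∧
        v = ∑ n ∈ Finset.Icc 2 N, Real.logb 2 (1 + pr n * γRD n)} =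
      sSup {v : ℝ | ∃ pr : ℕ → ℝ,
        (∀ n ∈ Finset.Icc 2 N, 0 ≤ pr n) ∧
        (∑ n ∈ Finset.Icc 2 N, pr n) ≤ Er ∧
        (∀ n ∈ Finset.Icc 2 N,
          (∑ i ∈ Finset.Icc 2 n, Real.logb 2 (1 + pr i * γRD i)) ≤
            ∑ i ∈ Finset.Icc 1 (n - 1), max (Real.logb 2 (eta * γSR i)) 0) ∧
        v = ∑ n ∈ Finset.Icc 2 N, Real.logb 2 (1 + pr n * γRD n)} :=
  stmt_15_general N hN γSR γRD hSR0 hRD0 hSR hRD Er eta xi Ehatr heta hxi hEhat1 hWFr hopt
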